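/- arXiv:1310.1794 — 2 statements merged into one kernel-verified Lean document; each statement's English description precedes it below -/
import Mathlib

section
/- Let E be a trace-free symmetric 3×3 real matrix and V(E) = min_{n ∈ S²} |E − (1/2)(3 n⊗n − I)|². Then V(E) = 0 if and only if the ordered eigenvalues of E are μ₁(E) = μ₂(E) = −1/2 and μ₃(E) = 1. -/
/-!
Conjugating by the orthogonal matrix whose rows are the eigenvectors turns `E` into
`D = diagonal μ` and `n ↦ Umat n` into `c ↦ Umat c` with `c` the coordinates of `n` in the
eigenbasis, and it preserves the Frobenius distance. For `D` trace free and `|c| = 1`,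
`|D - Umat c|² = 3/2 (μ₃ - 1)² + 1/2 (μ₁ - μ₂)² + 3 (μ₃ - μ₁) c₁² + 3 (μ₃ - μ₂) c₂²`,
so with ordered eigenvalues the minimum is attained at `c = e₃` and vanishes exactly when
`μ₁ = μ₂` and `μ₃ = 1`.
-/

open Matrix

noncomputable def Umat (n : Fin 3 → ℝ) : Matrix (Fin 3) (Fin 3) ℝ :=
  (1 / 2 : ℝ) • ((3 : ℝ) • Matrix.vecMulVec n n - 1)

noncomputable def distSqU (E : Matrix (Fin 3) (Fin 3) ℝ) (n : Fin 3 → ℝ) : ℝ :=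
  ∑ i, ∑ j, (E i j - Umat n i j) ^ 2

namespace Matrix

variable {m n R : Type*} [Fintype n]

theorem sum_sq_apply_eq_trace_transpose_mul_self [Fintype m] (C : Matrix m n ℝ) :
    ∑ i, ∑ j, C i j ^ 2 = (Cᵀ * C).trace := by
  simp only [trace, diag, mul_apply, transpose_apply, sq]
  exact Finset.sum_comm

theorem vecMulVec_mulVec_self [CommSemiring R] (A : Matrix m n R) (x : n → R) :
    vecMulVec (A *ᵥ x) (A *ᵥ x) = A * vecMulVec x x * Aᵀ := by
  rw [mul_vecMulVec, vecMulVec_mul, vecMul_transpose]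

variable [DecidableEq n]

theorem transpose_mem_orthogonalGroup [CommRing R] {M : Matrix n n R}
    (hM : M ∈ orthogonalGroup n R) : Mᵀ ∈ orthogonalGroup n R := by
  rw [mem_orthogonalGroup_iff, transpose_transpose]
  exact (mem_orthogonalGroup_iff' n R).1 hM

theorem trace_transpose_mul_mul [CommRing R] {M : Matrix n n R}
    (hM : M ∈ orthogonalGroup n R) (A : Matrix n n R) : (Mᵀ * A * M).trace = A.trace := by
  rw [trace_mul_comm, ← mul_assoc, (mem_orthogonalGroup_iff n R).1 hM, one_mul]

theorem sum_sq_apply_transpose_mul_mul {M : Matrix n n ℝ} (hM : M ∈ orthogonalGroup n ℝ)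
    (A : Matrix n n ℝ) : ∑ i, ∑ j, (Mᵀ * A * M) i j ^ 2 = ∑ i, ∑ j, A i j ^ 2 := by
  have hMMt := (mem_orthogonalGroup_iff n ℝ).1 hM
  simp only [sum_sq_apply_eq_trace_transpose_mul_self, transpose_mul, transpose_transpose]
  rw [← trace_transpose_mul_mul hM (Aᵀ * A)]
  congr 1
  simp only [mul_assoc]
  rw [← mul_assoc M Mᵀ, hMMt, one_mul]

theorem sum_sq_mulVec {M : Matrix n n ℝ} (hM : M ∈ orthogonalGroup n ℝ) (x : n → ℝ) :
    ∑ i, (M *ᵥ x) i ^ 2 = ∑ i, x i ^ 2 := by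
  simp only [sq]
  change (M *ᵥ x) ⬝ᵥ (M *ᵥ x) = x ⬝ᵥ x
  rw [dotProduct_mulVec, ← mulVec_transpose, mulVec_mulVec, (mem_orthogonalGroup_iff' n ℝ).1 hM,
    one_mulVec]

theorem eq_transpose_mul_diagonal_mul_of_eigenvectors [CommRing R] {E : Matrix n n R}
    {μ : n → R} {v : n → n → R} (hv : of v ∈ orthogonalGroup n R)
    (heig : ∀ i, E *ᵥ v i = μ i • v i) : E = (of v)ᵀ * diagonal μ * of v := by
  have hcols : E * (of v)ᵀ = (of v)ᵀ * diagonal μ := by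
    ext j i
    rw [mul_diagonal]
    simpa [mul_apply, mulVec, dotProduct, mul_comm] using congrFun (heig i) j
  calc E = E * ((of v)ᵀ * of v) := by rw [(mem_orthogonalGroup_iff' n R).1 hv, mul_one]
    _ = (of v)ᵀ * diagonal μ * of v := by rw [← mul_assoc, hcols]

end Matrix

theorem Umat_mulVec {M : Matrix (Fin 3) (Fin 3) ℝ} (hM : M ∈ orthogonalGroup (Fin 3) ℝ)
    (c : Fin 3 → ℝ) : Umat (M *ᵥ c) = M * Umat c * Mᵀ := by
  simp only [Umat, vecMulVec_mulVec_self, Matrix.mul_smul, Matrix.smul_mul, Matrix.mul_sub,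
    Matrix.sub_mul, Matrix.mul_one, (mem_orthogonalGroup_iff (Fin 3) ℝ).1 hM]

theorem distSqU_transpose_mul_mul {M : Matrix (Fin 3) (Fin 3) ℝ}
    (hM : M ∈ orthogonalGroup (Fin 3) ℝ) (A : Matrix (Fin 3) (Fin 3) ℝ) (c : Fin 3 → ℝ) :
    distSqU (Mᵀ * A * M) c = distSqU A (M *ᵥ c) := by
  have hc : c = Mᵀ *ᵥ (M *ᵥ c) := by
    rw [mulVec_mulVec, (mem_orthogonalGroup_iff' (Fin 3) ℝ).1 hM, one_mulVec]
  have hsub : Mᵀ * A * M - Umat c = Mᵀ * (A - Umat (M *ᵥ c)) * M := by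
    conv_lhs => rw [hc, Umat_mulVec (transpose_mem_orthogonalGroup hM), transpose_transpose]
    rw [Matrix.mul_sub, Matrix.sub_mul]
  simpa only [distSqU, ← Matrix.sub_apply, hsub] using sum_sq_apply_transpose_mul_mul hM _

theorem distSqU_sphere_transpose_mul_mul {M : Matrix (Fin 3) (Fin 3) ℝ}
    (hM : M ∈ orthogonalGroup (Fin 3) ℝ) (A : Matrix (Fin 3) (Fin 3) ℝ) :
    {x : ℝ | ∃ n : Fin 3 → ℝ, ∑ i, n i ^ 2 = 1 ∧ x = distSqU (Mᵀ * A * M) n} =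
      {x : ℝ | ∃ n : Fin 3 → ℝ, ∑ i, n i ^ 2 = 1 ∧ x = distSqU A n} := by
  ext x
  constructor
  · rintro ⟨n, hn, rfl⟩
    exact ⟨M *ᵥ n, by rwa [sum_sq_mulVec hM], distSqU_transpose_mul_mul hM A n⟩
  · rintro ⟨n, hn, rfl⟩
    refine ⟨Mᵀ *ᵥ n, by rwa [sum_sq_mulVec (transpose_mem_orthogonalGroup hM)], ?_⟩
    rw [distSqU_transpose_mul_mul hM, mulVec_mulVec, (mem_orthogonalGroup_iff (Fin 3) ℝ).1 hM,
      one_mulVec]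

theorem distSqU_diagonal {μ c : Fin 3 → ℝ} (hμ : ∑ i, μ i = 0) (hc : ∑ i, c i ^ 2 = 1) :
    distSqU (diagonal μ) c = 3 / 2 * (μ 2 - 1) ^ 2 + (μ 0 - μ 1) ^ 2 / 2 +
      3 * ((μ 2 - μ 0) * c 0 ^ 2 + (μ 2 - μ 1) * c 1 ^ 2) := by
  rw [Fin.sum_univ_three] at hμ hc
  simp only [distSqU, diagonal_apply, Umat, one_div, Matrix.smul_apply, Matrix.sub_apply,
    vecMulVec_apply, smul_eq_mul, one_apply, Fin.sum_univ_three, Fin.isValue, ↓reduceIte,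
    zero_ne_one, sub_zero, zero_sub, even_two, Even.neg_pow, Fin.reduceEq, one_ne_zero]
  linear_combination ((9 / 4 : ℝ) * (c 0 ^ 2 + c 1 ^ 2 + c 2 ^ 2 + 1) - 3 / 2 - 3 * μ 2) * hc +
    (1 + (μ 0 + μ 1 - μ 2) / 2) * hμ

theorem isLeast_distSqU_diagonal {μ : Fin 3 → ℝ} (hμ : ∑ i, μ i = 0) (hmono : Monotone μ) :
    IsLeast {x : ℝ | ∃ n : Fin 3 → ℝ, ∑ i, n i ^ 2 = 1 ∧ x = distSqU (diagonal μ) n}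
      (3 / 2 * (μ 2 - 1) ^ 2 + (μ 0 - μ 1) ^ 2 / 2) := by
  constructor
  · refine ⟨![0, 0, 1], by simp [Fin.sum_univ_three], ?_⟩
    rw [distSqU_diagonal hμ (by simp [Fin.sum_univ_three])]
    simp
  · rintro x ⟨c, hc, rfl⟩
    have h02 : μ 0 ≤ μ 2 := hmono (by decide)
    have h12 : μ 1 ≤ μ 2 := hmono (by decide)
    rw [distSqU_diagonal hμ hc]
    nlinarith [mul_nonneg (sub_nonneg.2 h02) (sq_nonneg (c 0)),
      mul_nonneg (sub_nonneg.2 h12) (sq_nonneg (c 1))]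

theorem V_eq_zero_iff_eigenvalues_general
    (E : Matrix (Fin 3) (Fin 3) ℝ) (htr : E.trace = 0)
    (μ : Fin 3 → ℝ) (v : Fin 3 → (Fin 3 → ℝ))
    (hmono : Monotone μ)
    (hortho : ∀ i j, (∑ k, v i k * v j k) = if i = j then (1 : ℝ) else 0)
    (heig : ∀ i, E *ᵥ v i = μ i • v i) :
    sInf {x : ℝ | ∃ n : Fin 3 → ℝ, (∑ i, (n i) ^ 2) = 1 ∧ x = distSqU E n} = 0 ↔
      (μ 0 = -(1 / 2) ∧ μ 1 = -(1 / 2) ∧ μ 2 = 1) := by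
  have hv : of v ∈ orthogonalGroup (Fin 3) ℝ := by
    rw [mem_orthogonalGroup_iff]
    ext i j
    simpa [mul_apply, one_apply] using hortho i j
  have hE := eq_transpose_mul_diagonal_mul_of_eigenvectors hv heig
  have hμ : ∑ i, μ i = 0 := by
    rwa [hE, trace_transpose_mul_mul hv, trace_diagonal] at htr
  rw [hE, distSqU_sphere_transpose_mul_mul hv, (isLeast_distSqU_diagonal hμ hmono).csInf_eq]
  rw [Fin.sum_univ_three] at hμ
  constructor
  · intro h
    have h2 : μ 2 = 1 := by nlinarith [sq_nonneg (μ 2 - 1), sq_nonneg (μ 0 - μ 1)]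
    have h01 : μ 0 = μ 1 := by nlinarith [sq_nonneg (μ 2 - 1), sq_nonneg (μ 0 - μ 1)]
    exact ⟨by linarith, by linarith, h2⟩
  · rintro ⟨h0, h1, h2⟩
    rw [h0, h1, h2]
    norm_num

theorem V_eq_zero_iff_eigenvalues
    (E : Matrix (Fin 3) (Fin 3) ℝ) (hE : E.IsSymm) (htr : E.trace = 0)
    (μ : Fin 3 → ℝ) (v : Fin 3 → (Fin 3 → ℝ))
    (hmono : Monotone μ)
    (hortho : ∀ i j, (∑ k, v i k * v j k) = if i = j then (1 : ℝ) else 0)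
    (heig : ∀ i, E *ᵥ v i = μ i • v i) :
    sInf {x : ℝ | ∃ n : Fin 3 → ℝ, (∑ i, (n i) ^ 2) = 1 ∧ x = distSqU E n} = 0 ↔
      (μ 0 = -(1 / 2) ∧ μ 1 = -(1 / 2) ∧ μ 2 = 1) :=
  V_eq_zero_iff_eigenvalues_general E htr μ v hmono hortho heig
end

section
/- Let B be a 3×3 trace-free symmetric real matrix with ordered eigenvalues μ₁ = −α, μ₂, μ₃ with μ₃ < 2α, for some α > 0, represented in an orthonormal eigenbasis as diag(−α, μ₂, μ₃). Set ε = √((2α − μ₂)(2α − μ₃)) and D^± = [[−α,0,0],[0,μ₂,±2ε],[0,0,μ₃]]. Then B = (1/2)(D⁺ + D⁻) with rank(D⁺ − D⁻) = 1, and the symmetric part of each D^± has eigenvalues −α, −α, 2α. -/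
/-!
The two matrices differ only in the entry `(1, 2)`, so their difference has rank one and their
mean is `B`. The symmetric part of `D^±` is `-α ⊕ [[μ₂, ±ε], [±ε, μ₃]]`, and the choice of `ε`
makes the `2 × 2` block have determinant `μ₂ μ₃ - ε² = -2α²` and trace `α`, hence eigenvalues
`-α` and `2α`.
-/

open Matrix Polynomial

namespace Matrix

variable {K n : Type*}

theorem single_eq_diagonal_submatrix_swap [Zero K] [DecidableEq n] (i j : n) (c : K) :
    single i j c = (diagonal (Pi.single i c)).submatrix id (Equiv.swap i j) := by
  ext k l
  by_cases hk : k = i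
  · subst hk
    have hswap : k = Equiv.swap k j l ↔ j = l := by
      rw [eq_comm, Equiv.swap_apply_eq_iff, Equiv.swap_apply_left, eq_comm]
    simp [single_apply, diagonal_apply, hswap]
  · simp [diagonal_apply, hk, Ne.symm hk]

theorem rank_single_of_ne_zero [Field K] [Fintype n] [DecidableEq n] (i j : n) {c : K}
    (hc : c ≠ 0) : (single i j c).rank = 1 := by
  classical
  rw [single_eq_diagonal_submatrix_swap, ← Equiv.coe_refl, rank_submatrix, rank_diagonal]
  simp [Pi.single_apply, hc]

theorem diagonal_eq_half_smul_add [Field K] [NeZero (2 : K)] (a b c d : K) :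
    diagonal ![a, b, c] =
      (1 / 2 : K) • (!![a, 0, 0; 0, b, d; 0, 0, c] + !![a, 0, 0; 0, b, -d; 0, 0, c]) := by
  ext i j
  fin_cases i <;> fin_cases j <;> simp <;> field_simp <;> ring

theorem sub_eq_single [CommRing K] (a b c d : K) :
    !![a, 0, 0; 0, b, d; 0, 0, c] - !![a, 0, 0; 0, b, -d; 0, 0, c] = single 1 2 (2 * d) := by
  ext i j
  fin_cases i <;> fin_cases j <;> simp; ring

theorem half_smul_add_transpose [Field K] [NeZero (2 : K)] (a b c e : K) :
    (1 / 2 : K) • (!![a, 0, 0; 0, b, 2 * e; 0, 0, c] + !![a, 0, 0; 0, b, 2 * e; 0, 0, c]ᵀ) =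
      !![a, 0, 0; 0, b, e; 0, e, c] := by
  ext i j
  fin_cases i <;> fin_cases j <;> simp <;> field_simp <;> ring

theorem charpoly_fin_three_block [CommRing K] (a b c e : K) :
    (!![a, 0, 0; 0, b, e; 0, e, c]).charpoly = (X - C a) * ((X - C b) * (X - C c) - C e ^ 2) := by
  rw [charpoly, det_fin_three]
  simp
  ring

theorem charpoly_fin_three_block_of_sq_eq [CommRing K] {α μ₂ μ₃ e : K}
    (htr : μ₂ + μ₃ = α) (he : e ^ 2 = (2 * α - μ₂) * (2 * α - μ₃)) :
    (!![-α, 0, 0; 0, μ₂, e; 0, e, μ₃]).charpoly = (X + C α) ^ 2 * (X - C (2 * α)) := by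
  have hdet : μ₂ * μ₃ - e ^ 2 = -2 * α ^ 2 := by linear_combination -he + 2 * α * htr
  have hdetC : C μ₂ * C μ₃ - C e ^ 2 = -2 * C α ^ 2 := by
    simpa only [map_sub, map_mul, map_pow, map_neg, map_ofNat] using congrArg C hdet
  have htrC : C μ₂ + C μ₃ = C α := by rw [← map_add, htr]
  rw [charpoly_fin_three_block, map_neg, sub_neg_eq_add, map_mul, map_ofNat]
  linear_combination (X + C α) * hdetC - (X + C α) * X * htrC

end Matrix

theorem second_splitting_step_general
    (B : Matrix (Fin 3) (Fin 3) ℝ) (μ₂ μ₃ α ε : ℝ)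
    (hB : B = Matrix.diagonal ![-α, μ₂, μ₃])
    (h23 : μ₂ ≤ μ₃) (hμ3 : μ₃ < 2 * α)
    (htr : -α + μ₂ + μ₃ = 0)
    (hε : ε = Real.sqrt ((2 * α - μ₂) * (2 * α - μ₃)))
    (Dp Dm : Matrix (Fin 3) (Fin 3) ℝ)
    (hDp : Dp = !![-α, 0, 0; 0, μ₂, 2 * ε; 0, 0, μ₃])
    (hDm : Dm = !![-α, 0, 0; 0, μ₂, -(2 * ε); 0, 0, μ₃]) :
    B = (1 / 2 : ℝ) • (Dp + Dm) ∧
    (Dp - Dm).rank = 1 ∧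
    ((1 / 2 : ℝ) • (Dp + Dpᵀ)).charpoly = (X + C α) ^ 2 * (X - C (2 * α)) ∧
    ((1 / 2 : ℝ) • (Dm + Dmᵀ)).charpoly = (X + C α) ^ 2 * (X - C (2 * α)) := by
  have hprod : 0 < (2 * α - μ₂) * (2 * α - μ₃) := mul_pos (by linarith) (by linarith)
  have hεpos : 0 < ε := hε ▸ Real.sqrt_pos.mpr hprod
  have hεsq : ε ^ 2 = (2 * α - μ₂) * (2 * α - μ₃) := hε ▸ Real.sq_sqrt hprod.le
  have htr' : μ₂ + μ₃ = α := by linarith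
  subst hB hDp hDm
  refine ⟨diagonal_eq_half_smul_add _ _ _ _, ?_, ?_, ?_⟩
  · rw [sub_eq_single]
    exact rank_single_of_ne_zero 1 2 (by positivity)
  · rw [half_smul_add_transpose]
    exact charpoly_fin_three_block_of_sq_eq htr' hεsq
  · rw [← mul_neg, half_smul_add_transpose]
    exact charpoly_fin_three_block_of_sq_eq htr' (by rwa [neg_sq])

theorem second_splitting_step
    (B : Matrix (Fin 3) (Fin 3) ℝ) (μ₂ μ₃ α ε : ℝ)
    (hB : B = Matrix.diagonal ![-α, μ₂, μ₃])
    (hα : 0 < α) (h12 : -α ≤ μ₂) (h23 : μ₂ ≤ μ₃) (hμ3 : μ₃ < 2 * α)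
    (htr : -α + μ₂ + μ₃ = 0)
    (hε : ε = Real.sqrt ((2 * α - μ₂) * (2 * α - μ₃)))
    (Dp Dm : Matrix (Fin 3) (Fin 3) ℝ)
    (hDp : Dp = !![-α, 0, 0; 0, μ₂, 2 * ε; 0, 0, μ₃])
    (hDm : Dm = !![-α, 0, 0; 0, μ₂, -(2 * ε); 0, 0, μ₃]) :
    B = (1 / 2 : ℝ) • (Dp + Dm) ∧
    (Dp - Dm).rank = 1 ∧
    ((1 / 2 : ℝ) • (Dp + Dpᵀ)).charpoly = (X + C α) ^ 2 * (X - C (2 * α)) ∧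
    ((1 / 2 : ℝ) • (Dm + Dmᵀ)).charpoly = (X + C α) ^ 2 * (X - C (2 * α)) :=
  second_splitting_step_general B μ₂ μ₃ α ε hB h23 hμ3 htr hε Dp Dm hDp hDm
end
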